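/- arXiv:1910.03621 — 8 statements merged into one kernel-verified Lean document; each statement's English description precedes it below -/
import Mathlib

section
/- Let f : ℝ → ℂ be continuous with |f(x)| ≤ M/(1+|x|)^α for some M > 0 and α > 1. Then there is a constant C (depending only on M and α) such that for all x ≥ 1, |Θ_f(x) − f(0)| ≤ C/x^α; in particular Θ_f(x) → f(0) as x → ∞. -/
open Real MeasureTheory Filter Set

theorem theta_tendsto_f_zero (f : ℝ → ℂ) (hf : Continuous f)
    (M α : ℝ) (hM : 0 < M) (hα : 1 < α)
    (hbound : ∀ x : ℝ, ‖f x‖ ≤ M / (1 + |x|) ^ α) :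
    (∃ C : ℝ, 0 < C ∧ ∀ x : ℝ, 1 ≤ x →
        ‖(∑' k : ℤ, f (k * x)) - f 0‖ ≤ C / x ^ α) ∧
      Tendsto (fun x : ℝ => ∑' k : ℤ, f (k * x)) atTop (nhds (f 0)) := by
  have hα0 : (0:ℝ) < α := lt_trans one_pos hα
  have hS : Summable fun k : ℤ => |(k:ℝ)| ^ (-α) := Real.summable_abs_int_rpow hα
  set S : ℝ := ∑' k : ℤ, |(k:ℝ)| ^ (-α) with hSdef
  have hS1 : (1:ℝ) ≤ S := by
    have := Summable.le_tsum hS 1 (fun k _ => Real.rpow_nonneg (abs_nonneg _) _)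
    simpa using this
  have hSpos : 0 < S := lt_of_lt_of_le one_pos hS1
  set C : ℝ := M * S with hCdef
  have hCpos : 0 < C := mul_pos hM hSpos
  have key : ∀ x : ℝ, 1 ≤ x → ‖(∑' k : ℤ, f (k * x)) - f 0‖ ≤ C / x ^ α := by
    intro x hx
    have hx0 : (0:ℝ) < x := lt_of_lt_of_le one_pos hx
    -- pointwise bound for k ≠ 0
    have hterm : ∀ k : ℤ, ‖(if k = 0 then 0 else f (k * x))‖ ≤ M * |(k:ℝ)| ^ (-α) * x ^ (-α) := by
      intro k
      rcases eq_or_ne k 0 with rfl | hk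
      · simp [Real.rpow_nonneg, mul_nonneg, hM.le, Real.rpow_nonneg (abs_nonneg (0:ℝ)),
          Real.rpow_nonneg hx0.le]
        positivity
      · rw [if_neg hk]
        refine (hbound _).trans ?_
        have hk1 : (1:ℝ) ≤ |(k:ℝ)| := by
          rw [← Int.cast_abs]
          exact_mod_cast Int.one_le_abs hk
        have hprod : |(k:ℝ)| * x ≤ 1 + |(k:ℝ) * x| := by
          rw [abs_mul, abs_of_pos hx0]
          linarith
        have hbase : 0 < |(k:ℝ)| * x := mul_pos (lt_of_lt_of_le one_pos hk1) hx0
        have h1 : M / (1 + |(k:ℝ) * x|) ^ α ≤ M / (|(k:ℝ)| * x) ^ α := by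
          apply div_le_div_of_nonneg_left hM.le (Real.rpow_pos_of_pos hbase _)
          exact Real.rpow_le_rpow hbase.le hprod hα0.le
        refine h1.trans_eq ?_
        rw [Real.mul_rpow (abs_nonneg _) hx0.le, div_eq_mul_inv, mul_inv,
          Real.rpow_neg (abs_nonneg _), Real.rpow_neg hx0.le, mul_assoc]
    have hmaj : Summable fun k : ℤ => M * |(k:ℝ)| ^ (-α) * x ^ (-α) :=
      (hS.mul_left M).mul_right _
    have hA : Summable fun k : ℤ => ‖(if k = 0 then 0 else f (k * x))‖ :=
      hmaj.of_nonneg_of_le (fun k => norm_nonneg _) hterm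
    have hs : Summable fun k : ℤ => f (k * x) := by
      have : (fun k : ℤ => f (k * x)) = Function.update (fun k : ℤ => if k = 0 then 0 else f (k * x)) 0 (f 0) := by
        funext k
        rcases eq_or_ne k 0 with rfl | hk
        · simp
        · simp [Function.update_apply, hk]
      rw [this]
      exact (hA.of_norm).update 0 (f 0)
    have hsplit : (∑' k : ℤ, f (k * x)) = f 0 + ∑' k : ℤ, if k = 0 then 0 else f (k * x) := by
      have := Summable.tsum_eq_add_tsum_ite hs 0
      simpa using this
    rw [hsplit]
    rw [add_sub_cancel_left]
    calc ‖∑' k : ℤ, if k = 0 then 0 else f (k * x)‖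
        ≤ ∑' k : ℤ, ‖(if k = 0 then 0 else f (k * x))‖ := norm_tsum_le_tsum_norm hA
      _ ≤ ∑' k : ℤ, M * |(k:ℝ)| ^ (-α) * x ^ (-α) := Summable.tsum_le_tsum hterm hA hmaj
      _ = C / x ^ α := by
          rw [tsum_mul_right, tsum_mul_left, Real.rpow_neg hx0.le, ← hSdef]
          rw [hCdef, div_eq_mul_inv]
  refine ⟨⟨C, hCpos, key⟩, ?_⟩
  rw [tendsto_iff_norm_sub_tendsto_zero]
  have hub : Tendsto (fun x : ℝ => C / x ^ α) atTop (nhds 0) :=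
    tendsto_const_nhds.div_atTop (tendsto_rpow_atTop hα0)
  refine squeeze_zero' ?_ ?_ hub
  · filter_upwards with x using norm_nonneg _
  · filter_upwards [eventually_ge_atTop 1] with x hx using key x hx
end

section
/- Let f : ℝ → ℂ satisfy: f ∈ C², f', f'' ∈ L¹(ℝ), and |f(x)| ≤ M/(1+|x|)^α for some M > 0, α > 1. Define Ξ_f(x) = Θ_f(x) − f(0)·1_{x>1} − f̂(0)/x for x > 0, where Θ_f(x) = ∑_{k∈ℤ} f(kx). Then there is a constant C depending only on f such that |Ξ_f(x)| ≤ C · min(x, 1/x) for all x > 0. -/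
/-!
For `x ≥ 1` each term `f (k x)` with `k ≠ 0` is at most `M (|k| x)^(-α)`, so
`Θ_f(x) - f(0) = O(x^(-α)) = O(1/x)`, and the other two terms of `Ξ_f(x)` are trivially `O(1/x)`.
For `x ≤ 1`, Poisson summation for `y ↦ f (y x)` gives `Θ_f(x) = x⁻¹ ∑ₙ f̂(n/x)`, whose `n = 0`
term is `f̂(0)/x`; integrating by parts twice, `|f̂(ξ)| ≤ ‖f''‖₁ / (2πξ)²`, so the other terms
sum to `O(x)`.
-/

open Real MeasureTheory Filter Set

/-- `Ξ_f(x) = Θ_f(x) - f(0)·1_{x>1} - f̂(0)/x`, where `Θ_f(x) = ∑_{k∈ℤ} f(kx)`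
and `f̂(0) = ∫ f`. -/
noncomputable def Xi (f : ℝ → ℂ) (x : ℝ) : ℂ :=
  (∑' k : ℤ, f (k * x)) - (if 1 < x then f 0 else 0) - (∫ y : ℝ, f y) / (x : ℂ)

open scoped FourierTransform

section Summation

variable {E : Type*} [NormedAddCommGroup E] [CompleteSpace E] {h : ℤ → E} {D e : ℝ}

theorem summable_of_norm_le_mul_abs_rpow (he : 1 < e)
    (hh : ∀ k ≠ 0, ‖h k‖ ≤ D * |(k : ℝ)| ^ (-e)) : Summable h := by
  refine Summable.of_norm_bounded_eventually ((summable_abs_int_rpow he).mul_left D) ?_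
  filter_upwards [eventually_cofinite_ne 0] with k hk using hh k hk

theorem norm_tsum_sub_apply_zero_le (he : 1 < e)
    (hh : ∀ k ≠ 0, ‖h k‖ ≤ D * |(k : ℝ)| ^ (-e)) :
    ‖∑' k, h k - h 0‖ ≤ D * ∑' k : ℤ, |(k : ℝ)| ^ (-e) := by
  rw [(summable_of_norm_le_mul_abs_rpow he hh).tsum_eq_add_tsum_ite 0, add_sub_cancel_left]
  refine tsum_of_norm_bounded ((summable_abs_int_rpow he).hasSum.mul_left D) fun k ↦ ?_
  split_ifs with hk
  -- the `k = 0` term of the majorant vanishes, as `0 ^ (-e) = 0` for `Real.rpow`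
  · simp [hk, zero_rpow (neg_ne_zero.mpr (zero_lt_one.trans he).ne')]
  · exact hh k hk

end Summation

theorem integrable_of_norm_le_div_one_add_abs_rpow {E : Type*} [NormedAddCommGroup E]
    {f : ℝ → E} (hf : AEStronglyMeasurable f) {M α : ℝ} (hα : 1 < α)
    (hbound : ∀ y, ‖f y‖ ≤ M / (1 + |y|) ^ α) : Integrable f := by
  refine ((integrable_one_add_norm (by simpa using hα)).const_mul M).mono' hf
    (.of_forall fun y ↦ ?_)
  rw [rpow_neg (by positivity), ← div_eq_mul_inv]
  exact hbound y

theorem norm_comp_mul_le_of_norm_le_div_one_add_abs_rpow {E : Type*} [Norm E] {f : ℝ → E}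
    {M α x : ℝ} (hM : 0 ≤ M) (hα : 0 ≤ α) (hbound : ∀ y, ‖f y‖ ≤ M / (1 + |y|) ^ α)
    (hx : 0 < x) {y : ℝ} (hy : y ≠ 0) : ‖f (y * x)‖ ≤ M * x ^ (-α) * |y| ^ (-α) := by
  have hyx : 0 < |y| * x := by positivity
  calc ‖f (y * x)‖ ≤ M / (1 + |y * x|) ^ α := hbound _
    _ ≤ M / (|y| * x) ^ α := by
        gcongr
        rw [abs_mul, abs_of_pos hx]
        linarith
    _ = M * x ^ (-α) * |y| ^ (-α) := by
        rw [mul_rpow (abs_nonneg y) hx.le, rpow_neg hx.le, rpow_neg (abs_nonneg y)]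
        field_simp

section Fourier

variable {E : Type*} [NormedAddCommGroup E] [NormedSpace ℂ E]

theorem Real.fourier_comp_mul_right (f : ℝ → E) {x : ℝ} (hx : x ≠ 0) (ξ : ℝ) :
    𝓕 (fun y ↦ f (y * x)) ξ = |x|⁻¹ • 𝓕 f (ξ / x) := by
  simp only [fourier_real_eq]
  rw [← abs_inv, ← Measure.integral_comp_mul_right (fun u ↦ 𝐞 (-(u * (ξ / x))) • f u) x]
  congr with y
  field_simp

theorem Real.pow_mul_norm_fourier_le [CompleteSpace E] {f : ℝ → E} {n : ℕ} (hf : ContDiff ℝ n f)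
    (hint : ∀ k ≤ n, Integrable (iteratedDeriv k f)) (ξ : ℝ) :
    (2 * π * |ξ|) ^ n * ‖𝓕 f ξ‖ ≤ ∫ y, ‖iteratedDeriv n f y‖ := by
  have hF := congrFun
    (fourier_iteratedDeriv hf (fun k hk ↦ hint k (by exact_mod_cast hk)) le_rfl) ξ
  calc (2 * π * |ξ|) ^ n * ‖𝓕 f ξ‖ = ‖𝓕 (iteratedDeriv n f) ξ‖ := by
        simp [hF, norm_smul, abs_of_pos pi_pos]
    _ ≤ ∫ y, ‖iteratedDeriv n f y‖ := VectorFourier.norm_fourierIntegral_le_integral_norm _ _ _ _ _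

theorem norm_fourier_comp_mul_right_le [CompleteSpace E] {f : ℝ → E} (hf : ContDiff ℝ 2 f)
    (hfi : Integrable f) (hf' : Integrable (deriv f)) (hf'' : Integrable (deriv (deriv f))) {x : ℝ} (hx : 0 < x)
    {ξ : ℝ} (hξ : ξ ≠ 0) :
    ‖𝓕 (fun y ↦ f (y * x)) ξ‖ ≤ (∫ y, ‖deriv (deriv f) y‖) / (4 * π ^ 2) * x * |ξ| ^ (-2 : ℝ) := by
  have hint : ∀ k ≤ 2, Integrable (iteratedDeriv k f) := by
    intro k hk
    interval_cases k <;> simpa [iteratedDeriv_succ]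
  have key := Real.pow_mul_norm_fourier_le hf hint (ξ / x)
  rw [iteratedDeriv_succ, iteratedDeriv_one] at key
  rw [Real.fourier_comp_mul_right f hx.ne' ξ, norm_smul, norm_inv, Real.norm_eq_abs, abs_abs,
    abs_of_pos hx, rpow_neg (abs_nonneg ξ), rpow_two, sq_abs]
  rw [abs_div, abs_of_pos hx, ← le_div_iff₀' (by positivity)] at key
  refine (mul_le_mul_of_nonneg_left key (by positivity)).trans_eq ?_
  rw [mul_pow, div_pow, sq_abs]
  field_simp
  ring

end Fourier

theorem tsum_comp_mul_right_eq_tsum_fourier {f : ℝ → ℂ} (hc : Continuous f) {M α x : ℝ}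
    (hM : 0 ≤ M) (hα : 1 < α) (hbound : ∀ y, ‖f y‖ ≤ M / (1 + |y|) ^ α) (hx : 0 < x)
    (hF : Summable fun n : ℤ ↦ 𝓕 (fun y ↦ f (y * x)) n) :
    ∑' k : ℤ, f (k * x) = ∑' n : ℤ, 𝓕 (fun y ↦ f (y * x)) n := by
  have hdecay : (fun y ↦ f (y * x)) =O[cocompact ℝ] (|·| ^ (-α)) := by
    refine .of_bound (M * x ^ (-α)) ?_
    filter_upwards [isCompact_singleton.compl_mem_cocompact] with y hy
    rw [norm_of_nonneg (by positivity)]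
    exact norm_comp_mul_le_of_norm_le_div_one_add_abs_rpow hM (by linarith) hbound hx hy
  simpa using Real.tsum_eq_tsum_fourier_of_rpow_decay_of_summable (by fun_prop) hα hdecay hF 0

theorem norm_Xi_le_of_one_le {f : ℝ → ℂ} {M α : ℝ} (hM : 0 ≤ M) (hα : 1 < α)
    (hbound : ∀ y, ‖f y‖ ≤ M / (1 + |y|) ^ α) {x : ℝ} (hx : 1 ≤ x) :
    ‖Xi f x‖ ≤ (M * ∑' k : ℤ, |(k : ℝ)| ^ (-α) + ‖f 0‖ + ‖∫ y, f y‖) / x := by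
  have hx0 : 0 < x := by linarith
  have htail : ‖∑' k : ℤ, f (k * x) - f 0‖ ≤ M * x⁻¹ * ∑' k : ℤ, |(k : ℝ)| ^ (-α) := by
    refine (norm_tsum_sub_apply_zero_le (h := fun k : ℤ ↦ f (k * x)) hα fun k hk ↦ ?_).trans_eq'
      (by rw [Int.cast_zero, zero_mul])
    calc ‖f (k * x)‖ ≤ M * x ^ (-α) * |(k : ℝ)| ^ (-α) :=
          norm_comp_mul_le_of_norm_le_div_one_add_abs_rpow hM (by linarith) hbound hx0
            (Int.cast_ne_zero.mpr hk)
      _ ≤ M * x⁻¹ * |(k : ℝ)| ^ (-α) := by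
          gcongr
          rw [← rpow_neg_one]
          exact rpow_le_rpow_of_exponent_le hx (by linarith)
  have hjump : ‖f 0 - if 1 < x then f 0 else 0‖ ≤ ‖f 0‖ / x := by
    split_ifs with h
    · simp only [sub_self, norm_zero]
      positivity
    · simp [le_antisymm (not_lt.mp h) hx]
  have hmean : ‖(∫ y, f y) / (x : ℂ)‖ = ‖∫ y, f y‖ / x := by
    rw [norm_div, Complex.norm_real, norm_of_nonneg hx0.le]
  calc ‖Xi f x‖
      = ‖(∑' k : ℤ, f (k * x) - f 0) + (f 0 - if 1 < x then f 0 else 0)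
          - (∫ y, f y) / (x : ℂ)‖ := by rw [Xi]; congr 1; ring
    _ ≤ M * x⁻¹ * ∑' k : ℤ, |(k : ℝ)| ^ (-α) + ‖f 0‖ / x + ‖∫ y, f y‖ / x := by
        rw [← hmean]
        exact (norm_sub_le _ _).trans (by gcongr; exact (norm_add_le _ _).trans (by gcongr))
    _ = _ := by ring

theorem norm_Xi_le_of_le_one {f : ℝ → ℂ} (hf : ContDiff ℝ 2 f) (hf' : Integrable (deriv f))
    (hf'' : Integrable (deriv (deriv f))) {M α : ℝ} (hM : 0 ≤ M) (hα : 1 < α)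
    (hbound : ∀ y, ‖f y‖ ≤ M / (1 + |y|) ^ α) {x : ℝ} (hx0 : 0 < x) (hx1 : x ≤ 1) :
    ‖Xi f x‖ ≤
      (∫ y, ‖deriv (deriv f) y‖) / (4 * π ^ 2) * (∑' k : ℤ, |(k : ℝ)| ^ (-2 : ℝ)) * x := by
  have hfi := integrable_of_norm_le_div_one_add_abs_rpow hf.continuous.aestronglyMeasurable hα
    hbound
  set g : ℝ → ℂ := fun y ↦ f (y * x)
  have hFg : ∀ n : ℤ, n ≠ 0 → ‖𝓕 g n‖ ≤
      (∫ y, ‖deriv (deriv f) y‖) / (4 * π ^ 2) * x * |(n : ℝ)| ^ (-2 : ℝ) := fun n hn ↦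
    norm_fourier_comp_mul_right_le hf hfi hf' hf'' hx0 (Int.cast_ne_zero.mpr hn)
  have hFg0 : 𝓕 g 0 = (∫ y, f y) / x := by
    rw [Real.fourier_comp_mul_right f hx0.ne', zero_div, Real.fourier_real_eq, abs_of_pos hx0]
    simp [div_eq_inv_mul]
  have hXi : Xi f x = ∑' n : ℤ, 𝓕 g n - 𝓕 g ((0 : ℤ) : ℝ) := by
    rw [Xi, if_neg (by linarith), tsum_comp_mul_right_eq_tsum_fourier hf.continuous hM hα hbound
      hx0 (summable_of_norm_le_mul_abs_rpow one_lt_two hFg), Int.cast_zero, hFg0, sub_zero]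
  rw [hXi]
  exact (norm_tsum_sub_apply_zero_le one_lt_two hFg).trans_eq (by ring)

theorem xi_bound (f : ℝ → ℂ) (hf : ContDiff ℝ 2 f)
    (hf' : Integrable (deriv f)) (hf'' : Integrable (deriv (deriv f)))
    (M α : ℝ) (hM : 0 < M) (hα : 1 < α)
    (hbound : ∀ x : ℝ, ‖f x‖ ≤ M / (1 + |x|) ^ α) :
    ∃ C : ℝ, 0 < C ∧ ∀ x : ℝ, 0 < x → ‖Xi f x‖ ≤ C * min x (1 / x) := by
  set A := M * ∑' k : ℤ, |(k : ℝ)| ^ (-α) + ‖f 0‖ + ‖∫ y, f y‖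
  set B := (∫ y, ‖deriv (deriv f) y‖) / (4 * π ^ 2) * (∑' k : ℤ, |(k : ℝ)| ^ (-2 : ℝ))
  have hA : 0 ≤ A := by
    have : 0 ≤ ∑' k : ℤ, |(k : ℝ)| ^ (-α) := tsum_nonneg fun k ↦ by positivity
    positivity
  have hB : 0 ≤ B := by
    have : 0 ≤ ∑' k : ℤ, |(k : ℝ)| ^ (-2 : ℝ) := tsum_nonneg fun k ↦ by positivity
    have : 0 ≤ ∫ y, ‖deriv (deriv f) y‖ := integral_nonneg fun y ↦ norm_nonneg _
    positivity
  refine ⟨A + B + 1, by positivity, fun x hx ↦ ?_⟩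
  rcases le_total 1 x with hx1 | hx1
  · rw [min_eq_right ((div_le_one hx).mpr hx1 |>.trans hx1)]
    calc ‖Xi f x‖ ≤ A / x := norm_Xi_le_of_one_le hM.le hα hbound hx1
      _ ≤ (A + B + 1) * (1 / x) := by rw [← div_eq_mul_one_div]; gcongr; linarith
  · rw [min_eq_left (hx1.trans ((one_le_div hx).mpr hx1))]
    calc ‖Xi f x‖ ≤ B * x := norm_Xi_le_of_le_one hf hf' hf'' hM.le hα hbound hx hx1
      _ ≤ (A + B + 1) * x := by gcongr; linarith
end

section
/- Under assumptions (H) on f, the function Ξ_f is continuous at every point of (0,∞) \ {1}; if moreover f(0) = 0 then Ξ_f is continuous on all of (0,∞). -/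
open Real MeasureTheory Filter Set

lemma summable_aux {M α ε : ℝ} (hα : 1 < α) (hε : 0 < ε) :
    Summable (fun k : ℤ => M / (1 + |(k : ℝ)| * ε) ^ α) := by
  have hnat : Summable (fun n : ℕ => M / (1 + (n : ℝ) * ε) ^ α) := by
    have h := ((Real.summable_one_div_nat_add_rpow (1 / ε) α).mpr hα).mul_left (M / ε ^ α)
    refine h.congr fun n => ?_
    have h1 : (0:ℝ) < (n : ℝ) + 1 / ε := by positivity
    have h2 : (1 + (n : ℝ) * ε) = ε * ((n : ℝ) + 1 / ε) := by
      field_simp; ring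
    rw [abs_of_pos h1, h2, Real.mul_rpow hε.le h1.le]
    rw [div_mul_eq_mul_div, mul_one_div, div_div, mul_comm]
  apply Summable.of_nat_of_neg
  · refine hnat.congr fun n => ?_
    simp
  · refine hnat.congr fun n => ?_
    simp

lemma theta_contAt (f : ℝ → ℂ) (hc : Continuous f)
    (M α : ℝ) (hα : 1 < α)
    (hbound : ∀ x : ℝ, ‖f x‖ ≤ M / (1 + |x|) ^ α)
    {x₀ : ℝ} (hx₀ : 0 < x₀) :
    ContinuousAt (fun x => ∑' k : ℤ, f (k * x)) x₀ := by
  set ε := x₀ / 2 with hεdef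
  have hε : 0 < ε := by positivity
  have hco : ContinuousOn (fun x => ∑' k : ℤ, f (k * x)) (Ici ε) := by
    refine continuousOn_tsum (u := fun k : ℤ => M / (1 + |(k : ℝ)| * ε) ^ α)
      (fun k => (hc.comp (continuous_const.mul continuous_id)).continuousOn)
      (summable_aux hα hε) (fun k x hx => ?_)
    have hxε : ε ≤ x := hx
    refine (hbound _).trans ?_
    have h1 : (1 : ℝ) + |(k:ℝ)| * ε ≤ 1 + |(k:ℝ) * x| := by
      rw [abs_mul]
      have : |(k:ℝ)| * ε ≤ |(k:ℝ)| * |x| := by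
        refine mul_le_mul_of_nonneg_left ?_ (abs_nonneg _)
        exact hxε.trans (le_abs_self x)
      linarith
    have hM0 : 0 ≤ M := by
      have := (norm_nonneg (f 0)).trans (hbound 0)
      simpa using this
    refine div_le_div_of_nonneg_left hM0 (by positivity) ?_
    exact Real.rpow_le_rpow (by positivity) h1 (by linarith)
  exact hco.continuousAt (Ici_mem_nhds (by simpa [hεdef] using half_lt_self hx₀))

theorem xi_continuous (f : ℝ → ℂ) (hf : ContDiff ℝ 2 f)
    (hf' : Integrable (deriv f)) (hf'' : Integrable (deriv (deriv f)))
    (M α : ℝ) (hM : 0 < M) (hα : 1 < α)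
    (hbound : ∀ x : ℝ, ‖f x‖ ≤ M / (1 + |x|) ^ α) :
    (∀ x ∈ Set.Ioi (0 : ℝ) \ {1}, ContinuousAt (Xi f) x) ∧
      (f 0 = 0 → ∀ x ∈ Set.Ioi (0 : ℝ), ContinuousAt (Xi f) x) := by
  have hc : Continuous f := hf.continuous
  have hth : ∀ x₀ ∈ Set.Ioi (0:ℝ), ContinuousAt (fun x => ∑' k : ℤ, f (k * x)) x₀ :=
    fun x₀ hx₀ => theta_contAt f hc M α hα hbound hx₀
  have hdiv : ∀ x₀ ∈ Set.Ioi (0:ℝ), ContinuousAt (fun x : ℝ => (∫ y : ℝ, f y) / (x : ℂ)) x₀ := by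
    intro x₀ hx₀
    refine ContinuousAt.div continuousAt_const (Complex.continuous_ofReal.continuousAt) ?_
    exact_mod_cast ne_of_gt (show (0:ℝ) < x₀ from hx₀)
  have hXi : Xi f = fun x : ℝ => (fun x => ∑' k : ℤ, f (k * x)) x
      - (fun x : ℝ => if 1 < x then f 0 else 0) x
      - (fun x : ℝ => (∫ y : ℝ, f y) / (x : ℂ)) x := rfl
  rw [hXi]
  constructor
  · intro x hx
    obtain ⟨hx0, hx1⟩ := hx
    have hite : ContinuousAt (fun x : ℝ => if 1 < x then f 0 else 0) x := by
      rcases lt_or_gt_of_ne (hx1 : x ≠ 1) with h | h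
      · have heq : (fun x : ℝ => if 1 < x then f 0 else 0) =ᶠ[nhds x] fun _ => (0 : ℂ) := by
          filter_upwards [Iio_mem_nhds h] with y hy
          have : ¬ (1 < y) := not_lt.mpr (le_of_lt (mem_Iio.mp hy))
          simp [this]
        exact continuousAt_const.congr heq.symm
      · have heq : (fun x : ℝ => if 1 < x then f 0 else 0) =ᶠ[nhds x] fun _ => f 0 := by
          filter_upwards [Ioi_mem_nhds h] with y hy
          simp [mem_Ioi.mp hy]
        exact continuousAt_const.congr heq.symm
    exact ((hth x hx0).sub hite).sub (hdiv x hx0)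
  · intro h0 x hx0
    have hite : ContinuousAt (fun x : ℝ => if 1 < x then f 0 else 0) x := by
      have heq : (fun x : ℝ => if 1 < x then f 0 else 0) =ᶠ[nhds x] fun _ => (0 : ℂ) := by
        filter_upwards with y
        simp [h0]
      exact continuousAt_const.congr heq.symm
    exact ((hth x hx0).sub hite).sub (hdiv x hx0)
end

section
/- Let θ > 0, and W_ℓ ~ Poisson(θ/ℓ) independent. Suppose g : (0,∞) → ℝ satisfies |g(x)| ≤ C min(x, 1/x). Then for every n ≥ 1 and every δ ∈ (0,1), E[∑_{ℓ=1}^n W_ℓ |g(1/(ℓδ))|] and Var(∑_{ℓ=1}^n W_ℓ |g(1/(ℓδ))|) are both bounded by a constant depending only on C and θ (uniformly in n and δ). In particular ∑_{ℓ=1}^n W_ℓ g(1/(ℓδ)) is bounded in L². -/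
open Real MeasureTheory ProbabilityTheory Finset
open scoped NNReal ENNReal Nat

/-! A Poisson variable of rate `λ` has mean and variance `λ`, so by independence the weighted sum
`S = ∑ W_ℓ c_ℓ` has `E S = ∑ (θ/ℓ) c_ℓ`, `Var S = ∑ (θ/ℓ) c_ℓ²` and `E S² = Var S + (E S)²`.
For `c_ℓ = g (1/(ℓδ))` the decay of `g` gives, with `x = ℓδ`,
`|c_ℓ|ᵖ / ℓ ≤ Cᵖ min(x, 1/x) / ℓ ≤ 2 Cᵖ δ / (1 + x²) ≤ 2 Cᵖ (arctan (ℓδ) - arctan ((ℓ-1)δ))`,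
which telescopes to the bound `Cᵖ π`, uniform in `n` and `δ`. -/

lemma hasSum_poisson_mul_descFactorial (r : ℝ) (j : ℕ) :
    HasSum (fun n : ℕ => exp (-r) * r ^ n / n ! * n.descFactorial j) (r ^ j) := by
  rw [← hasSum_nat_add_iff' j]
  have hlow : ∑ n ∈ range j, exp (-r) * r ^ n / n ! * (n.descFactorial j : ℝ) = 0 :=
    sum_eq_zero fun n hn => by
      simp [Nat.descFactorial_eq_zero_iff_lt.mpr (mem_range.mp hn)]
  have hshift (n : ℕ) : exp (-r) * r ^ (n + j) / (n + j)! * ((n + j).descFactorial j : ℝ) =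
      exp (-r) * r ^ j * (r ^ n / n !) := by
    have hfact := Nat.factorial_mul_descFactorial (Nat.le_add_left j n)
    rw [Nat.add_sub_cancel] at hfact
    rw [← hfact, Nat.cast_mul]
    have hn : (n ! : ℝ) ≠ 0 := by positivity
    have hd : ((n + j).descFactorial j : ℝ) ≠ 0 := by
      exact_mod_cast (Nat.descFactorial_pos.mpr (Nat.le_add_left j n)).ne'
    field_simp
    ring
  simp_rw [hlow, sub_zero, hshift]
  have hexp := (NormedSpace.expSeries_div_hasSum_exp r).mul_left (exp (-r) * r ^ j)
  rwa [← exp_eq_exp_ℝ, mul_right_comm, ← exp_add, neg_add_cancel, exp_zero, one_mul] at hexp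

lemma hasSum_poisson_mul_sq (r : ℝ) :
    HasSum (fun n : ℕ => exp (-r) * r ^ n / n ! * (n : ℝ) ^ 2) (r + r ^ 2) := by
  have h := (hasSum_poisson_mul_descFactorial r 1).add (hasSum_poisson_mul_descFactorial r 2)
  simp only [Nat.descFactorial_one, Nat.cast_descFactorial_two, pow_one] at h
  convert h using 2 with n
  ring

section PoissonMoments

variable (r : ℝ≥0)

lemma integral_natCast_poissonMeasure : ∫ n, (n : ℝ) ∂Po(r) = r := by
  rw [integral_poissonMeasure r (fun n : ℕ => (n : ℝ))]
  simpa using (hasSum_poisson_mul_descFactorial r 1).tsum_eq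

lemma integral_natCast_sq_poissonMeasure : ∫ n, (n : ℝ) ^ 2 ∂Po(r) = r + r ^ 2 := by
  rw [integral_poissonMeasure r (fun n : ℕ => (n : ℝ) ^ 2)]
  simpa using (hasSum_poisson_mul_sq r).tsum_eq

lemma memLp_natCast_poissonMeasure : MemLp (fun n : ℕ => (n : ℝ)) 2 Po(r) := by
  rw [memLp_two_iff_integrable_sq .of_discrete, integrable_poissonMeasure_iff]
  simpa using (hasSum_poisson_mul_sq r).summable

lemma variance_natCast_poissonMeasure : Var[fun n : ℕ => (n : ℝ); Po(r)] = r := by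
  rw [variance_eq_sub (memLp_natCast_poissonMeasure r)]
  simp only [Pi.pow_apply, integral_natCast_sq_poissonMeasure, integral_natCast_poissonMeasure]
  ring

end PoissonMoments

namespace ProbabilityTheory.HasLaw

variable {Ω 𝓧 : Type*} [MeasurableSpace Ω] [MeasurableSpace 𝓧] {P : Measure Ω}
  {X : Ω → 𝓧} {ν : Measure 𝓧}

lemma memLp_comp (hX : HasLaw X ν P) {f : 𝓧 → ℝ} {p : ℝ≥0∞} (hf : MemLp f p ν) :
    MemLp (f ∘ X) p P := by
  rw [← hX.map_eq] at hf
  exact hf.comp_of_map hX.aemeasurable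

lemma variance_comp (hX : HasLaw X ν P) {f : 𝓧 → ℝ} (hf : AEMeasurable f ν) :
    Var[f ∘ X; P] = Var[f; ν] := by
  rw [← hX.map_eq] at hf ⊢
  exact (variance_map hf hX.aemeasurable).symm

variable {X : Ω → ℕ} {r : ℝ≥0} (hX : HasLaw X Po(r) P)
include hX

lemma memLp_natCast_of_poisson : MemLp (fun ω => (X ω : ℝ)) 2 P :=
  hX.memLp_comp (memLp_natCast_poissonMeasure r)

lemma integral_natCast_of_poisson : ∫ ω, (X ω : ℝ) ∂P = r :=
  (hX.integral_comp (f := fun n : ℕ => (n : ℝ)) .of_discrete).trans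
    (integral_natCast_poissonMeasure r)

lemma variance_natCast_of_poisson : Var[fun ω => (X ω : ℝ); P] = r :=
  (hX.variance_comp (f := fun n : ℕ => (n : ℝ)) .of_discrete).trans
    (variance_natCast_poissonMeasure r)

end ProbabilityTheory.HasLaw

lemma hasLaw_poissonMeasure {Ω : Type*} [MeasurableSpace Ω] {P : Measure Ω} {X : Ω → ℕ}
    (hX : Measurable X) {r : ℝ≥0}
    (h : ∀ k : ℕ, P {ω | X ω = k} = ENNReal.ofReal (exp (-r) * r ^ k / k !)) :
    HasLaw X Po(r) P where
  map_eq := Measure.ext_of_singleton fun k => by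
    rw [Measure.map_apply hX (measurableSet_singleton k), poissonMeasure_singleton]
    exact h k

lemma min_self_inv_le {x : ℝ} (hx : 0 < x) : min x x⁻¹ ≤ 2 * x / (1 + x ^ 2) := by
  rw [le_div_iff₀ (by positivity)]
  have hinv : x⁻¹ * x = 1 := inv_mul_cancel₀ hx.ne'
  rcases le_total x 1 with h | h <;>
    nlinarith [min_le_left x x⁻¹, min_le_right x x⁻¹, inv_pos.mpr hx]

lemma div_one_add_sq_le_arctan_sub {a b : ℝ} (ha : 0 ≤ a) (hab : a ≤ b) :
    (b - a) / (1 + b ^ 2) ≤ arctan b - arctan a := by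
  calc (b - a) / (1 + b ^ 2) = ∫ _x in a..b, 1 / (1 + b ^ 2) := by
        rw [intervalIntegral.integral_const, smul_eq_mul, mul_one_div]
    _ ≤ ∫ x in a..b, 1 / (1 + x ^ 2) := by
      refine intervalIntegral.integral_mono_on hab intervalIntegrable_const
        intervalIntegral.intervalIntegrable_one_div_one_add_sq fun x hx => ?_
      have hx0 : 0 ≤ x := ha.trans hx.1
      gcongr
      exact hx.2
    _ = arctan b - arctan a := integral_one_div_one_add_sq

lemma sum_Icc_min_div_le_two_mul_arctan {δ : ℝ} (hδ : 0 < δ) (n : ℕ) :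
    ∑ ℓ ∈ Icc 1 n, min (ℓ * δ) (ℓ * δ)⁻¹ / ℓ ≤ 2 * arctan (n * δ) := by
  induction n with
  | zero => simp
  | succ n ih =>
    rw [sum_Icc_succ_top (by omega)]
    have hstep : min ((n + 1 : ℕ) * δ) ((n + 1 : ℕ) * δ)⁻¹ / (n + 1 : ℕ) ≤
        2 * (arctan ((n + 1 : ℕ) * δ) - arctan (n * δ)) := by
      push_cast
      calc min ((n + 1) * δ) ((n + 1) * δ)⁻¹ / (n + 1)
          ≤ 2 * ((n + 1) * δ) / (1 + ((n + 1) * δ) ^ 2) / (n + 1) := by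
            gcongr; exact min_self_inv_le (by positivity)
        _ = 2 * (((n + 1) * δ - n * δ) / (1 + ((n + 1) * δ) ^ 2)) := by
            field_simp; ring
        _ ≤ 2 * (arctan ((n + 1) * δ) - arctan (n * δ)) := by
            gcongr; exact div_one_add_sq_le_arctan_sub (by positivity) (by gcongr; linarith)
    linarith

lemma sum_Icc_min_div_le_pi {δ : ℝ} (hδ : 0 < δ) (n : ℕ) :
    ∑ ℓ ∈ Icc 1 n, min (ℓ * δ) (ℓ * δ)⁻¹ / ℓ ≤ π := by
  linarith [sum_Icc_min_div_le_two_mul_arctan hδ n, arctan_lt_pi_div_two (n * δ)]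

section Decay

variable {g : ℝ → ℝ} {C : ℝ} (hg : ∀ x : ℝ, 0 < x → |g x| ≤ C * min x (1 / x))
include hg

lemma nonneg_of_abs_le_mul_min : 0 ≤ C := by
  simpa using (abs_nonneg _).trans (hg 1 one_pos)

lemma abs_one_div_pow_le {x : ℝ} (hx : 0 < x) {p : ℕ} (hp : p ≠ 0) :
    |g (1 / x)| ^ p ≤ C ^ p * min x x⁻¹ := by
  have hbound : |g (1 / x)| ≤ C * min x x⁻¹ := by
    simpa [min_comm] using hg (1 / x) (by positivity)
  have hmin_pos : 0 < min x x⁻¹ := lt_min hx (inv_pos.mpr hx)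
  have hmin_le_one : min x x⁻¹ ≤ 1 := by
    rcases le_total x 1 with h | h
    · exact (min_le_left _ _).trans h
    · exact (min_le_right _ _).trans (inv_le_one_of_one_le₀ h)
  have hC := nonneg_of_abs_le_mul_min hg
  calc |g (1 / x)| ^ p ≤ (C * min x x⁻¹) ^ p := by gcongr
    _ = C ^ p * min x x⁻¹ ^ p := mul_pow _ _ _
    _ ≤ C ^ p * min x x⁻¹ := by gcongr; exact pow_le_of_le_one hmin_pos.le hmin_le_one hp

lemma sum_Icc_abs_pow_div_le {δ : ℝ} (hδ : 0 < δ) {p : ℕ} (hp : p ≠ 0) (n : ℕ) :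
    ∑ ℓ ∈ Icc 1 n, |g (1 / (ℓ * δ))| ^ p / ℓ ≤ C ^ p * π := by
  have hC : 0 ≤ C ^ p := pow_nonneg (nonneg_of_abs_le_mul_min hg) p
  calc ∑ ℓ ∈ Icc 1 n, |g (1 / (ℓ * δ))| ^ p / ℓ
      ≤ ∑ ℓ ∈ Icc 1 n, C ^ p * (min (ℓ * δ) (ℓ * δ)⁻¹ / ℓ) := by
        refine sum_le_sum fun ℓ hℓ => ?_
        have hℓ : (0 : ℝ) < ℓ := by exact_mod_cast (mem_Icc.mp hℓ).1
        rw [mul_div_assoc']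
        gcongr
        exact abs_one_div_pow_le hg (by positivity) hp
    _ ≤ C ^ p * π := by
        rw [← mul_sum]; gcongr; exact sum_Icc_min_div_le_pi hδ n

end Decay

section WeightedSums

variable {Ω ι : Type*} [MeasurableSpace Ω] {μ : Measure Ω} {s : Finset ι}

lemma variance_sum_mul_const {X : ι → Ω → ℝ} (hX : ∀ i ∈ s, MemLp (X i) 2 μ)
    (hind : iIndepFun X μ) (c : ι → ℝ) :
    Var[fun ω => ∑ i ∈ s, X i ω * c i; μ] = ∑ i ∈ s, Var[X i; μ] * c i ^ 2 := by
  have hind' := hind.comp (fun i x => x * c i) fun i => measurable_id.mul_const (c i)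
  have hfun : (fun ω => ∑ i ∈ s, X i ω * c i) = ∑ i ∈ s, fun ω => X i ω * c i := by
    ext ω; simp
  rw [hfun, IndepFun.variance_sum (fun i hi => (hX i hi).mul_const (c i))
    fun i _ j _ hij => hind'.indepFun hij]
  exact sum_congr rfl fun i _ => variance_mul_const _ _ _

variable {W : ι → Ω → ℕ} {r : ι → ℝ≥0}
  (hW : ∀ i ∈ s, HasLaw (W i) Po(r i) μ) (c : ι → ℝ)
include hW

lemma memLp_sum_mul_of_poisson : MemLp (fun ω => ∑ i ∈ s, (W i ω : ℝ) * c i) 2 μ :=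
  memLp_finsetSum s fun i hi => (hW i hi).memLp_natCast_of_poisson.mul_const (c i)

lemma integral_sum_mul_of_poisson [IsFiniteMeasure μ] :
    ∫ ω, ∑ i ∈ s, (W i ω : ℝ) * c i ∂μ = ∑ i ∈ s, r i * c i := by
  rw [integral_finsetSum s fun i hi =>
    ((hW i hi).memLp_natCast_of_poisson.mul_const (c i)).integrable one_le_two]
  exact sum_congr rfl fun i hi => by rw [integral_mul_const, (hW i hi).integral_natCast_of_poisson]

lemma variance_sum_mul_of_poisson (hind : iIndepFun W μ) :
    Var[fun ω => ∑ i ∈ s, (W i ω : ℝ) * c i; μ] = ∑ i ∈ s, r i * c i ^ 2 := by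
  rw [variance_sum_mul_const (X := fun i ω => (W i ω : ℝ))
    (fun i hi => (hW i hi).memLp_natCast_of_poisson)
    (hind.comp (fun _ k => (k : ℝ)) fun _ => measurable_of_countable _)]
  exact sum_congr rfl fun i hi => by rw [(hW i hi).variance_natCast_of_poisson]

lemma integral_sq_sum_mul_of_poisson [IsProbabilityMeasure μ] (hind : iIndepFun W μ) :
    ∫ ω, (∑ i ∈ s, (W i ω : ℝ) * c i) ^ 2 ∂μ =
      ∑ i ∈ s, r i * c i ^ 2 + (∑ i ∈ s, r i * c i) ^ 2 := by
  have h := variance_eq_sub (memLp_sum_mul_of_poisson hW c)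
  rw [variance_sum_mul_of_poisson hW c hind, integral_sum_mul_of_poisson hW c] at h
  simp only [Pi.pow_apply] at h
  linarith

end WeightedSums

theorem poisson_weighted_sum_L2_bounded_general (θ : ℝ) (hθ : 0 < θ)
    {Ω : Type*} [MeasurableSpace Ω] (μ : Measure Ω) [IsProbabilityMeasure μ]
    (W : ℕ → Ω → ℕ) (hmeas : ∀ ℓ, Measurable (W ℓ))
    (hindep : iIndepFun W μ)
    (hpois : ∀ ℓ : ℕ, 1 ≤ ℓ → ∀ k : ℕ,
      μ {ω | W ℓ ω = k} =
        ENNReal.ofReal (Real.exp (-(θ / ℓ)) * (θ / ℓ) ^ k / (Nat.factorial k)))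
    (g : ℝ → ℝ) (C : ℝ)
    (hg : ∀ x : ℝ, 0 < x → |g x| ≤ C * min x (1 / x)) :
    ∃ D : ℝ, ∀ n : ℕ, 1 ≤ n → ∀ δ : ℝ, 0 < δ → δ < 1 →
      (∫ ω, (∑ ℓ ∈ Finset.Icc 1 n, (W ℓ ω : ℝ) * |g (1 / (ℓ * δ))|) ∂μ ≤ D) ∧
        variance (fun ω => ∑ ℓ ∈ Finset.Icc 1 n, (W ℓ ω : ℝ) * |g (1 / (ℓ * δ))|) μ ≤ D ∧
        (∫ ω, (∑ ℓ ∈ Finset.Icc 1 n, (W ℓ ω : ℝ) * g (1 / (ℓ * δ))) ^ 2 ∂μ ≤ D) := by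
  refine ⟨max (θ * C * π) (θ * C ^ 2 * π + (θ * C * π) ^ 2), fun n _ δ hδ _ => ?_⟩
  let rate (ℓ : ℕ) : ℝ≥0 := ⟨θ / ℓ, by positivity⟩
  have hlaw : ∀ ℓ ∈ Icc 1 n, HasLaw (W ℓ) Po(rate ℓ) μ := fun ℓ hℓ =>
    hasLaw_poissonMeasure (hmeas ℓ) (hpois ℓ (mem_Icc.mp hℓ).1)
  have hweighted {p : ℕ} (hp : p ≠ 0) :
      ∑ ℓ ∈ Icc 1 n, θ / ℓ * |g (1 / (ℓ * δ))| ^ p ≤ θ * (C ^ p * π) := by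
    simp_rw [div_mul_comm θ, mul_comm _ θ, ← mul_sum]
    gcongr
    exact sum_Icc_abs_pow_div_le hg hδ hp n
  have hmean : ∑ ℓ ∈ Icc 1 n, θ / ℓ * |g (1 / (ℓ * δ))| ≤ θ * C * π := by
    simpa [mul_assoc] using hweighted one_ne_zero
  have hvar : ∑ ℓ ∈ Icc 1 n, θ / ℓ * g (1 / (ℓ * δ)) ^ 2 ≤ θ * C ^ 2 * π := by
    simpa [mul_assoc] using hweighted two_ne_zero
  have hmean_signed : |∑ ℓ ∈ Icc 1 n, θ / ℓ * g (1 / (ℓ * δ))| ≤ θ * C * π := by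
    refine (abs_sum_le_sum_abs _ _).trans (le_of_eq_of_le (sum_congr rfl fun ℓ _ => ?_) hmean)
    rw [abs_mul, abs_of_nonneg (by positivity)]
  refine ⟨?_, ?_, ?_⟩
  · rw [integral_sum_mul_of_poisson hlaw]
    exact hmean.trans (le_max_left _ _)
  · rw [variance_sum_mul_of_poisson hlaw _ hindep]
    simp only [sq_abs]
    exact hvar.trans ((le_add_of_nonneg_right (sq_nonneg _)).trans (le_max_right _ _))
  · rw [integral_sq_sum_mul_of_poisson hlaw _ hindep, ← sq_abs (∑ ℓ ∈ Icc 1 n, _)]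
    exact (add_le_add hvar (pow_le_pow_left₀ (abs_nonneg _) hmean_signed 2)).trans (le_max_right _ _)

theorem poisson_weighted_sum_L2_bounded (θ : ℝ) (hθ : 0 < θ)
    {Ω : Type*} [MeasurableSpace Ω] (μ : Measure Ω) [IsProbabilityMeasure μ]
    (W : ℕ → Ω → ℕ) (hmeas : ∀ ℓ, Measurable (W ℓ))
    (hindep : iIndepFun W μ)
    (hpois : ∀ ℓ : ℕ, 1 ≤ ℓ → ∀ k : ℕ,
      μ {ω | W ℓ ω = k} =
        ENNReal.ofReal (Real.exp (-(θ / ℓ)) * (θ / ℓ) ^ k / (Nat.factorial k)))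
    (g : ℝ → ℝ) (C : ℝ) (hC : 0 < C)
    (hg : ∀ x : ℝ, 0 < x → |g x| ≤ C * min x (1 / x)) :
    ∃ D : ℝ, ∀ n : ℕ, 1 ≤ n → ∀ δ : ℝ, 0 < δ → δ < 1 →
      (∫ ω, (∑ ℓ ∈ Finset.Icc 1 n, (W ℓ ω : ℝ) * |g (1 / (ℓ * δ))|) ∂μ ≤ D) ∧
        variance (fun ω => ∑ ℓ ∈ Finset.Icc 1 n, (W ℓ ω : ℝ) * |g (1 / (ℓ * δ))|) μ ≤ D ∧
        (∫ ω, (∑ ℓ ∈ Finset.Icc 1 n, (W ℓ ω : ℝ) * g (1 / (ℓ * δ))) ^ 2 ∂μ ≤ D) :=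
  poisson_weighted_sum_L2_bounded_general θ hθ μ W hmeas hindep hpois g C hg
end

section
/- Let θ > 0 and Ψ_n(j) = ∏_{k=0}^{j−1} (n−k)/(θ+n−k−1) for 1 ≤ j ≤ n. Then (1/n) ∑_{j=1}^n Ψ_n(j) = 1/θ. -/
open Real Filter

/-- `Ψ_n(j) = n(n-1)⋯(n-j+1) / ((n+θ-1)(n+θ-2)⋯(n+θ-j))`. -/
noncomputable def Psi (θ : ℝ) (n j : ℕ) : ℝ :=
  ∏ k ∈ Finset.range j, ((n : ℝ) - k) / (θ + n - k - 1)

theorem psi_sum_eq (θ : ℝ) (hθ : 0 < θ) (n : ℕ) (hn : 1 ≤ n) :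
    (1 / (n : ℝ)) * ∑ j ∈ Finset.Icc 1 n, Psi θ n j = 1 / θ := by
  set G : ℕ → ℝ := fun j => (θ + n - j) * Psi θ n j with hG
  have hPsucc : ∀ j : ℕ, Psi θ n (j + 1)
      = Psi θ n j * (((n : ℝ) - j) / (θ + n - j - 1)) := by
    intro j
    simp only [Psi, Finset.prod_range_succ]
  have hPn1 : Psi θ n (n + 1) = 0 := by
    rw [hPsucc]
    simp
  have key : ∀ j : ℕ, j ≤ n → θ * Psi θ n j = G j - G (j + 1) := by
    intro j hj
    rcases eq_or_lt_of_le hj with h | h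
    · subst h
      simp only [hG, hPn1, mul_zero, sub_zero]
      ring_nf
    · have hd : (0 : ℝ) < θ + n - j - 1 := by
        have : (j : ℝ) + 1 ≤ n := by exact_mod_cast h
        linarith
      simp only [hG, hPsucc]
      have : (θ + (n : ℝ) - (j + 1 : ℕ)) = θ + n - j - 1 := by push_cast; ring
      rw [this]
      field_simp
      ring
  have hsum : θ * ∑ j ∈ Finset.Icc 1 n, Psi θ n j = G 1 - G (n + 1) := by
    rw [Finset.mul_sum, ← Finset.Ico_add_one_right_eq_Icc, Finset.sum_Ico_eq_sum_range]
    have h1 : ∀ i ∈ Finset.range (n + 1 - 1), θ * Psi θ n (1 + i)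
        = G (1 + i) - G (1 + i + 1) := by
      intro i hi
      apply key
      simp only [Finset.mem_range] at hi
      omega
    rw [Finset.sum_congr rfl h1]
    have := Finset.sum_range_sub' (fun i => G (1 + i)) (n + 1 - 1)
    simp only [← add_assoc] at this
    rw [show 1 + (n + 1 - 1) = n + 1 from by omega, show (1:ℕ) + 0 = 1 from rfl] at this
    exact this
  have hG1 : G 1 = n := by
    have hd : (0 : ℝ) < θ + n - 1 := by
      have : (1 : ℝ) ≤ n := by exact_mod_cast hn
      linarith
    simp only [hG, Psi, Finset.prod_range_one, Nat.cast_zero, Nat.cast_one, sub_zero]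
    field_simp
  have hGn1 : G (n + 1) = 0 := by simp [hG, hPn1]
  rw [hG1, hGn1, sub_zero] at hsum
  have hn' : (0 : ℝ) < n := by exact_mod_cast hn
  field_simp
  linarith
end

section
/- Let θ > 0 and Ψ_n(j) = n(n−1)⋯(n−j+1)/((n+θ−1)⋯(n+θ−j)). Then ∑_{j=1}^n Ψ_n(j)/j = ∑_{j=1}^n 1/(θ + j − 1). -/
open Real Filter

/-!
Write `T_n = ∑_{j=1}^n Ψ_n(j)/j`; it suffices that `T_{n+1} = T_n + 1/(θ+n)`.
Since `Ψ_{n+1}(j+1) = (n+1)/(θ+n) · Ψ_n(j)`, this amounts to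
`(θ+n) T_n - (n+1) ∑_{j=1}^n Ψ_n(j)/(j+1) = n`, and that sum telescopes: its `j`-th term is
`b_{j-1} - b_j` for `b_i = Ψ_n(i)(n-i)/(i+1)`, with `b_0 = n` and `b_n = 0`.
-/

open Finset

lemma sum_Icc_one_eq_sum_range {M : Type*} [AddCommMonoid M] (f : ℕ → M) (n : ℕ) :
    ∑ j ∈ Icc 1 n, f j = ∑ j ∈ range n, f (j + 1) := by
  rw [range_eq_Ico, sum_Ico_add', zero_add, Ico_add_one_right_eq_Icc]

namespace Psi

variable (θ : ℝ) (n j : ℕ)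

@[simp]
lemma zero_right : Psi θ n 0 = 1 := by
  simp [Psi]

lemma succ_right : Psi θ n (j + 1) = Psi θ n j * (((n : ℝ) - j) / (θ + n - j - 1)) := by
  rw [Psi, prod_range_succ, Psi]

lemma succ_succ : Psi θ (n + 1) (j + 1) = ((n : ℝ) + 1) / (θ + n) * Psi θ n j := by
  rw [Psi, prod_range_succ', Psi, mul_comm]
  push_cast
  congr 1
  · ring_nf
  · refine prod_congr rfl fun k _ ↦ ?_
    ring_nf

lemma succ_one : Psi θ (n + 1) 1 = ((n : ℝ) + 1) / (θ + n) := by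
  simpa using succ_succ θ n 0

lemma weighted_div_sub_eq_telescope {θ : ℝ} (hθ : 0 < θ) {n j : ℕ} (hj : j < n) :
    (θ + n) * (Psi θ n (j + 1) / (j + 1)) - (n + 1) * (Psi θ n (j + 1) / (j + 1 + 1)) =
      Psi θ n j * (n - j) / (j + 1) - Psi θ n (j + 1) * (n - (j + 1 : ℕ)) / ((j + 1 : ℕ) + 1) := by
  have hjn : (j : ℝ) + 1 ≤ n := by exact_mod_cast hj
  have hden : θ + n - j - 1 ≠ 0 := by linarith
  rw [succ_right]
  push_cast
  field_simp
  ring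

end Psi

lemma weighted_sum_Psi_div_sub_eq {θ : ℝ} (hθ : 0 < θ) (n : ℕ) :
    (θ + n) * ∑ j ∈ range n, Psi θ n (j + 1) / (j + 1) -
      (n + 1) * ∑ j ∈ range n, Psi θ n (j + 1) / (j + 1 + 1) = n := by
  rw [mul_sum, mul_sum, ← sum_sub_distrib,
    sum_congr rfl fun j hj ↦ Psi.weighted_div_sub_eq_telescope hθ (mem_range.mp hj),
    sum_range_sub' (fun i ↦ Psi θ n i * (n - i) / (i + 1))]
  simp

lemma sum_Psi_div_succ_eq {θ : ℝ} (hθ : 0 < θ) (n : ℕ) :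
    ∑ j ∈ range (n + 1), Psi θ (n + 1) (j + 1) / (j + 1 : ℕ) =
      ∑ j ∈ range n, Psi θ n (j + 1) / (j + 1 : ℕ) + 1 / (θ + n) := by
  have hθn : θ + n ≠ 0 := by positivity
  rw [sum_range_succ', sum_congr rfl fun j _ ↦ by rw [Psi.succ_succ], Psi.succ_one]
  push_cast
  simp only [mul_div_assoc, ← mul_sum]
  field_simp
  linear_combination -weighted_sum_Psi_div_sub_eq hθ n

theorem psi_div_sum_eq_general (θ : ℝ) (hθ : 0 < θ) (n : ℕ) :
    ∑ j ∈ Finset.Icc 1 n, Psi θ n j / j =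
      ∑ j ∈ Finset.Icc 1 n, 1 / (θ + (j : ℝ) - 1) := by
  rw [sum_Icc_one_eq_sum_range, sum_Icc_one_eq_sum_range]
  induction n with
  | zero => simp
  | succ n ih =>
    rw [sum_Psi_div_succ_eq hθ, ih, sum_range_succ]
    push_cast
    ring_nf

theorem psi_div_sum_eq (θ : ℝ) (hθ : 0 < θ) (n : ℕ) (hn : 1 ≤ n) :
    ∑ j ∈ Finset.Icc 1 n, Psi θ n j / j =
      ∑ j ∈ Finset.Icc 1 n, 1 / (θ + (j : ℝ) - 1) :=
  psi_div_sum_eq_general θ hθ n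
end

section
/- Let θ > 0 and Ψ_n(j) = n(n−1)⋯(n−j+1)/((n+θ−1)⋯(n+θ−j)). Then ∑_{j=1}^n Ψ_n(j)/j² → π²/6 as n → ∞. -/
/-!
For fixed `j`, `Ψ_n(j) → 1`, so by Tannery's theorem it suffices to dominate `Ψ_n(j) / j²`
by a summable sequence. Each factor of `Ψ_n(j)` decreases in `θ` and, when `θ ≤ 1`, in `n`;
hence with `θ' = min θ 1` we get `Ψ_n(j) ≤ Ψ_j(j) = ∏_{i<j} (i+1)/(θ'+i) ≤ j^{1-θ'}/θ'`,
the last bound by induction on `j` from the weighted AM-GM inequality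
`j^{1-θ'} (j+1)^{θ'} ≤ j + θ'`.
-/

open Real Filter

open Topology

theorem tendsto_finset_sum_of_dominated_convergence {α β G : Type*} {𝓕 : Filter α} [𝓕.NeBot]
    [NormedAddCommGroup G] [CompleteSpace G] {f : α → β → G} {g : β → G} {bound : β → ℝ}
    {s : α → Finset β} (h_sum : Summable bound) (h_lim : ∀ k, Tendsto (f · k) 𝓕 (𝓝 (g k)))
    (h_mem : ∀ k, ∀ᶠ n in 𝓕, k ∈ s n) (h_bound : ∀ n, ∀ k ∈ s n, ‖f n k‖ ≤ bound k) :
    Tendsto (fun n ↦ ∑ k ∈ s n, f n k) 𝓕 (𝓝 (∑' k, g k)) := by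
  classical
  have h_tsum (n : α) : ∑ k ∈ s n, f n k = ∑' k, if k ∈ s n then f n k else 0 :=
    (Finset.sum_congr rfl fun k hk ↦ (if_pos hk).symm).trans
      (tsum_eq_sum fun k hk ↦ if_neg hk).symm
  simp only [h_tsum]
  refine tendsto_tsum_of_dominated_convergence h_sum
    (fun k ↦ (h_lim k).congr' ((h_mem k).mono fun n hn ↦ (if_pos hn).symm))
    (Eventually.of_forall fun n k ↦ ?_)
  split_ifs with hk
  · exact h_bound n k hk
  · obtain ⟨m, hm⟩ := (h_mem k).exists
    simpa using (norm_nonneg _).trans (h_bound m k hm)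

theorem rpow_one_sub_mul_add_one_le {x θ : ℝ} (hx : 0 ≤ x) (hθ₀ : 0 ≤ θ) (hθ₁ : θ ≤ 1) :
    x ^ (1 - θ) * (x + 1) ≤ (x + θ) * (x + 1) ^ (1 - θ) := by
  have amgm : x ^ (1 - θ) * (x + 1) ^ θ ≤ (1 - θ) * x + θ * (x + 1) :=
    geom_mean_le_arith_mean2_weighted (by linarith) hθ₀ hx (by linarith) (by ring)
  calc x ^ (1 - θ) * (x + 1) = x ^ (1 - θ) * (x + 1) ^ θ * (x + 1) ^ (1 - θ) := by
        rw [mul_assoc, ← rpow_add (by linarith), add_sub_cancel, rpow_one]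
    _ ≤ (x + θ) * (x + 1) ^ (1 - θ) := by
        gcongr
        linarith

namespace Psi

theorem factor_nonneg {θ : ℝ} (hθ : 0 < θ) {n k : ℕ} (hk : k < n) :
    0 ≤ ((n : ℝ) - k) / (θ + n - k - 1) := by
  have : (k : ℝ) + 1 ≤ n := by exact_mod_cast hk
  apply div_nonneg <;> linarith

theorem nonneg {θ : ℝ} (hθ : 0 < θ) {n j : ℕ} (hjn : j ≤ n) : 0 ≤ Psi θ n j :=
  Finset.prod_nonneg fun _ hk ↦ factor_nonneg hθ ((Finset.mem_range.1 hk).trans_le hjn)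

theorem le_Psi_of_le {θ θ' : ℝ} (hθ' : 0 < θ') (hθ'θ : θ' ≤ θ) (hθ'1 : θ' ≤ 1) {m n j : ℕ}
    (hjm : j ≤ m) (hmn : m ≤ n) : Psi θ n j ≤ Psi θ' m j := by
  refine Finset.prod_le_prod (fun k hk ↦ factor_nonneg (hθ'.trans_le hθ'θ) ?_) fun k hk ↦ ?_
  · exact (Finset.mem_range.1 hk).trans_le (hjm.trans hmn)
  have hkm : (k : ℝ) + 1 ≤ m := by exact_mod_cast (Finset.mem_range.1 hk).trans_le hjm
  have hmn : (m : ℝ) ≤ n := by exact_mod_cast hmn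
  calc ((n : ℝ) - k) / (θ + n - k - 1) ≤ ((n : ℝ) - k) / (θ' + n - k - 1) := by
        gcongr <;> linarith
    _ ≤ ((m : ℝ) - k) / (θ' + m - k - 1) := by
        rw [div_le_div_iff₀ (by linarith) (by linarith)]
        nlinarith

theorem self_succ (θ : ℝ) (j : ℕ) :
    Psi θ (j + 1) (j + 1) = Psi θ j j * ((j + 1) / (θ + j)) := by
  simp only [Psi, Finset.prod_range_succ']
  congr 1
  · refine Finset.prod_congr rfl fun k _ ↦ ?_
    push_cast
    ring_nf
  · push_cast
    ring_nf

theorem self_le_rpow {θ : ℝ} (hθ₀ : 0 < θ) (hθ₁ : θ ≤ 1) {j : ℕ} (hj : 1 ≤ j) :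
    Psi θ j j ≤ θ⁻¹ * (j : ℝ) ^ (1 - θ) := by
  induction j, hj using Nat.le_induction with
  | base => simp [Psi]
  | succ j hj ih =>
    have hj : (0 : ℝ) < j := by exact_mod_cast hj
    rw [self_succ, Nat.cast_succ]
    calc Psi θ j j * ((j + 1) / (θ + j)) ≤ θ⁻¹ * (j : ℝ) ^ (1 - θ) * ((j + 1) / (θ + j)) := by
          gcongr
      _ = θ⁻¹ * ((j : ℝ) ^ (1 - θ) * (j + 1)) / (j + θ) := by ring
      _ ≤ θ⁻¹ * ((j + θ) * ((j : ℝ) + 1) ^ (1 - θ)) / (j + θ) := by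
          gcongr θ⁻¹ * ?_ / _
          exact rpow_one_sub_mul_add_one_le hj.le hθ₀.le hθ₁
      _ = θ⁻¹ * ((j : ℝ) + 1) ^ (1 - θ) := by
          field_simp

theorem le_rpow {θ : ℝ} (hθ : 0 < θ) {n j : ℕ} (hj : 1 ≤ j) (hjn : j ≤ n) :
    Psi θ n j ≤ (min θ 1)⁻¹ * (j : ℝ) ^ (1 - min θ 1) :=
  (le_Psi_of_le (lt_min hθ one_pos) (min_le_left _ _) (min_le_right _ _) le_rfl hjn).trans
    (self_le_rpow (lt_min hθ one_pos) (min_le_right _ _) hj)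

theorem div_sq_le {θ : ℝ} (hθ : 0 < θ) {n j : ℕ} (hjn : j ≤ n) :
    Psi θ n j / (j : ℝ) ^ 2 ≤ (min θ 1)⁻¹ * (j : ℝ) ^ (-(1 + min θ 1)) := by
  rcases Nat.eq_zero_or_pos j with rfl | hj
  · rw [Nat.cast_zero, zero_rpow (by linarith [lt_min hθ one_pos])]
    simp
  have hjR : (0 : ℝ) < j := by exact_mod_cast hj
  calc Psi θ n j / (j : ℝ) ^ 2 ≤ (min θ 1)⁻¹ * (j : ℝ) ^ (1 - min θ 1) / (j : ℝ) ^ (2 : ℝ) := by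
        rw [rpow_two]
        gcongr
        exact le_rpow hθ hj hjn
    _ = (min θ 1)⁻¹ * (j : ℝ) ^ (-(1 + min θ 1)) := by
        rw [mul_div_assoc, ← rpow_sub hjR]
        ring_nf

theorem tendsto_one (θ : ℝ) (j : ℕ) : Tendsto (fun n : ℕ ↦ Psi θ n j) atTop (𝓝 1) := by
  rw [← Finset.prod_const_one (s := Finset.range j)]
  refine tendsto_finsetProd _ fun k _ ↦ ?_
  have hden : Tendsto (fun n : ℕ ↦ θ + n - k - 1) atTop atTop :=
    tendsto_atTop_add_const_right _ _ <| tendsto_atTop_add_const_right _ _ <|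
      tendsto_atTop_add_const_left _ _ tendsto_natCast_atTop_atTop
  have hlim : Tendsto (fun n : ℕ ↦ 1 + (1 - θ) / (θ + n - k - 1)) atTop (𝓝 1) := by
    simpa using (tendsto_const_nhds.div_atTop hden).const_add 1
  refine hlim.congr' ((hden.eventually_gt_atTop 0).mono fun n hn ↦ ?_)
  field_simp
  ring

end Psi

theorem psi_div_sq_sum_tendsto (θ : ℝ) (hθ : 0 < θ) :
    Tendsto (fun n : ℕ => ∑ j ∈ Finset.Icc 1 n, Psi θ n j / (j : ℝ) ^ 2) atTop
      (nhds (Real.pi ^ 2 / 6)) := by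
  have h_range (n : ℕ) : ∑ j ∈ Finset.Icc 1 n, Psi θ n j / (j : ℝ) ^ 2
      = ∑ j ∈ Finset.range (n + 1), Psi θ n j / (j : ℝ) ^ 2 := by
    refine Finset.sum_subset (fun j hj ↦ ?_) fun j hj hj' ↦ ?_
    · simp only [Finset.mem_Icc, Finset.mem_range] at hj ⊢
      omega
    · obtain rfl : j = 0 := by simp only [Finset.mem_Icc, Finset.mem_range] at hj hj'; omega
      simp
  simp only [h_range]
  rw [← hasSum_zeta_two.tsum_eq]
  refine tendsto_finset_sum_of_dominated_convergence
    ((summable_nat_rpow.2 (by linarith [lt_min hθ one_pos] : -(1 + min θ 1) < -1)).mul_left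
      (min θ 1)⁻¹)
    (fun j ↦ by simpa using (Psi.tendsto_one θ j).div_const ((j : ℝ) ^ 2))
    (fun j ↦ eventually_ge_atTop j |>.mono fun n hn ↦ Finset.mem_range_succ_iff.2 hn)
    fun n j hj ↦ ?_
  have hjn := Finset.mem_range_succ_iff.1 hj
  rw [Real.norm_of_nonneg (div_nonneg (Psi.nonneg hθ hjn) (sq_nonneg _))]
  exact Psi.div_sq_le hθ hjn
end

section
/- Let θ > 0, δ_n → 0 with nδ_n → ∞, and let g : (0,∞) → ℂ be continuous with |g(x)| ≤ C min(x, 1/x). Let W_ℓ ~ Poisson(θ/ℓ) independent. Then for each t ∈ ℝ, E[exp(it ∑_{ℓ=1}^n W_ℓ g(1/(ℓδ_n)))] → exp(θ ∫_0^∞ (e^{itg(1/x)} − 1) dx/x) as n → ∞. -/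
/-!
Writing the exponent as `∑ z_ℓ W_ℓ`, independence factorises the expectation and each Poisson
factor equals `exp (θ / ℓ * (exp z_ℓ - 1))`. The resulting exponent `θ ∑ δ_n F (ℓ δ_n)`, with
`F x = (exp (i t g (1 / x)) - 1) / x`, is a right Riemann sum of `∫₀^∞ F`. It converges by
dominated convergence applied to the step functions: `|g x| ≤ C min x (1 / x)` bounds `‖F x‖` by a
multiple of `1 / (1 + x ^ 2)`, which is decreasing and integrable; `n δ_n → ∞` makes the steps
eventually cover each `x > 0`, and `δ_n → 0` makes them converge to `F x`.
-/

open Real MeasureTheory Filter Set ProbabilityTheory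
open scoped NNReal Nat Topology Complex

lemma integral_cexp_mul_poissonMeasure (r : ℝ≥0) (c : ℂ) :
    ∫ n, cexp (c * n) ∂(poissonMeasure r) = cexp (r * (cexp c - 1)) := by
  rw [integral_poissonMeasure]
  calc ∑' n : ℕ, (rexp (-r) * r ^ n / n ! : ℝ) • cexp (c * n)
      = ∑' n : ℕ, rexp (-r) * ((r * cexp c) ^ n / n !) := by
        congr with n
        rw [Complex.real_smul, mul_pow, mul_comm c, Complex.exp_nat_mul]
        push_cast
        ring
    _ = rexp (-r) * cexp (r * cexp c) := by
        rw [tsum_mul_left, (NormedSpace.expSeries_div_hasSum_exp _).tsum_eq, Complex.exp_eq_exp_ℂ]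
    _ = cexp (r * (cexp c - 1)) := by
        rw [Complex.ofReal_exp, ← Complex.exp_add]
        push_cast
        ring_nf

lemma map_eq_poissonMeasure {Ω : Type*} [MeasurableSpace Ω] {μ : Measure Ω} {X : Ω → ℕ}
    (hX : Measurable X) {r : ℝ} (hr : 0 ≤ r)
    (hlaw : ∀ k : ℕ, μ {ω | X ω = k} = ENNReal.ofReal (rexp (-r) * r ^ k / k !)) :
    μ.map X = poissonMeasure r.toNNReal :=
  Measure.ext_of_singleton fun k => by
    rw [Measure.map_apply hX (measurableSet_singleton k), poissonMeasure_singleton,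
      Real.coe_toNNReal r hr]
    exact hlaw k

lemma iIndepFun.integral_finset_prod_eq_prod_integral {Ω ι 𝕜 : Type*} [RCLike 𝕜]
    [MeasurableSpace Ω] {μ : Measure Ω} {X : ι → Ω → 𝕜} (hX : iIndepFun X μ)
    (mX : ∀ i, AEStronglyMeasurable (X i) μ) (s : Finset ι) :
    ∫ ω, ∏ i ∈ s, X i ω ∂μ = ∏ i ∈ s, ∫ ω, X i ω ∂μ := by
  have h := iIndepFun.integral_fun_prod_eq_prod_integral
    (hX.precomp (g := ((↑) : s → ι)) Subtype.val_injective) fun i => mX i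
  rwa [Finset.univ_eq_attach, Finset.prod_attach s fun i => ∫ ω, X i ω ∂μ,
    integral_congr_ae (.of_forall fun ω => Finset.prod_attach s fun i => X i ω)] at h

lemma integral_cexp_sum_mul_poisson {Ω ι : Type*} [MeasurableSpace Ω] {μ : Measure Ω}
    {W : ι → Ω → ℕ} (hW : iIndepFun W μ) (hmeas : ∀ i, Measurable (W i)) (s : Finset ι)
    (r : ι → ℝ≥0) (hlaw : ∀ i ∈ s, μ.map (W i) = poissonMeasure (r i)) (z : ι → ℂ) :
    ∫ ω, cexp (∑ i ∈ s, z i * W i ω) ∂μ =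
      cexp (∑ i ∈ s, r i * (cexp (z i) - 1)) := by
  simp_rw [Complex.exp_sum]
  rw [iIndepFun.integral_finset_prod_eq_prod_integral (X := fun i ω => cexp (z i * W i ω))
    (hW.comp (fun i (k : ℕ) => cexp (z i * k)) fun _ => measurable_from_nat)
    fun i => ((measurable_from_nat (f := fun k : ℕ => cexp (z i * k))).comp
      (hmeas i)).aestronglyMeasurable]
  refine Finset.prod_congr rfl fun i hi => ?_
  rw [← integral_cexp_mul_poissonMeasure, ← hlaw i hi,
    integral_map (hmeas i).aemeasurable measurable_from_nat.aestronglyMeasurable]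

section RiemannSum

variable {E : Type*} [NormedAddCommGroup E] {F : ℝ → E} {δ x : ℝ} {n : ℕ}

noncomputable def rightRiemannStep (F : ℝ → E) (δ : ℝ) (n : ℕ) (x : ℝ) : E :=
  ∑ ℓ ∈ Finset.Icc 1 n, (Ioc ((ℓ - 1) * δ) (ℓ * δ)).indicator (fun _ => F (ℓ * δ)) x

lemma integral_rightRiemannStep [NormedSpace ℝ E] [CompleteSpace E] (hδ : 0 < δ) :
    ∫ x in Ioi 0, rightRiemannStep F δ n x = ∑ ℓ ∈ Finset.Icc 1 n, δ • F (ℓ * δ) := by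
  unfold rightRiemannStep
  rw [integral_finsetSum _ fun ℓ _ =>
    ((integrableOn_const measure_Ioc_lt_top.ne).integrable_indicator measurableSet_Ioc).restrict]
  refine Finset.sum_congr rfl fun ℓ hℓ => ?_
  have hℓ : (1 : ℝ) ≤ ℓ := by exact_mod_cast (Finset.mem_Icc.mp hℓ).1
  have hsub : Ioc ((ℓ - 1) * δ) (ℓ * δ) ⊆ Ioi 0 := fun y hy =>
    lt_of_le_of_lt (mul_nonneg (by linarith) hδ.le) hy.1
  rw [integral_indicator measurableSet_Ioc, Measure.restrict_restrict measurableSet_Ioc,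
    inter_eq_self_of_subset_left hsub, setIntegral_const, Real.volume_real_Ioc_of_le (by nlinarith)]
  congr 1
  ring

lemma le_natCeil_div_mul (hδ : 0 < δ) (x : ℝ) : x ≤ ⌈x / δ⌉₊ * δ :=
  (div_le_iff₀ hδ).mp (Nat.le_ceil _)

lemma natCeil_div_mul_le (hδ : 0 < δ) (hx : 0 ≤ x) : ⌈x / δ⌉₊ * δ ≤ x + δ := by
  have h := (Nat.ceil_lt_add_one (div_nonneg hx hδ.le)).le
  calc (⌈x / δ⌉₊ : ℝ) * δ ≤ (x / δ + 1) * δ := by gcongr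
    _ = x + δ := by field_simp

lemma rightRiemannStep_eq (hδ : 0 < δ) (hx : 0 < x) :
    rightRiemannStep F δ n x = if ⌈x / δ⌉₊ ≤ n then F (⌈x / δ⌉₊ * δ) else 0 := by
  have hmem : ∀ ℓ ∈ Finset.Icc 1 n, x ∈ Ioc ((ℓ - 1) * δ) (ℓ * δ) ↔ ℓ = ⌈x / δ⌉₊ := by
    intro ℓ hℓ
    have hℓ1 := (Finset.mem_Icc.mp hℓ).1
    rw [mem_Ioc, ← div_le_iff₀ hδ, ← lt_div_iff₀ hδ, eq_comm, Nat.ceil_eq_iff (by omega),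
      Nat.cast_sub hℓ1, Nat.cast_one]
  calc rightRiemannStep F δ n x
      = ∑ ℓ ∈ Finset.Icc 1 n, if ℓ = ⌈x / δ⌉₊ then F (ℓ * δ) else 0 :=
        Finset.sum_congr rfl fun ℓ hℓ => by
          rw [indicator_apply]
          exact if_congr (hmem ℓ hℓ) rfl rfl
    _ = _ := by
        rw [Finset.sum_ite_eq']
        simp [Nat.one_le_ceil_iff.mpr (div_pos hx hδ)]

lemma norm_rightRiemannStep_le {b : ℝ → ℝ} (hb : AntitoneOn b (Ioi 0))
    (hFb : ∀ y, 0 < y → ‖F y‖ ≤ b y) (hδ : 0 < δ) (hx : 0 < x) :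
    ‖rightRiemannStep F δ n x‖ ≤ b x := by
  rw [rightRiemannStep_eq hδ hx]
  split_ifs
  · have hle := le_natCeil_div_mul hδ x
    exact (hFb _ (hx.trans_le hle)).trans (hb hx (hx.trans_le hle) hle)
  · simpa using (norm_nonneg _).trans (hFb x hx)

lemma tendsto_rightRiemannStep {δ : ℕ → ℝ} (hδpos : ∀ n, 0 < δ n)
    (hδ0 : Tendsto δ atTop (𝓝 0)) (hnδ : Tendsto (fun n : ℕ => n * δ n) atTop atTop)
    (hF : ContinuousOn F (Ioi 0)) (hx : 0 < x) :
    Tendsto (fun n => rightRiemannStep F (δ n) n x) atTop (𝓝 (F x)) := by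
  have hnode : Tendsto (fun n => (⌈x / δ n⌉₊ : ℝ) * δ n) atTop (𝓝[Ioi 0] x) := by
    refine tendsto_nhdsWithin_iff.mpr ⟨?_, .of_forall fun n => ?_⟩
    · refine tendsto_of_tendsto_of_tendsto_of_le_of_le tendsto_const_nhds ?_
        (fun n => le_natCeil_div_mul (hδpos n) x) fun n => natCeil_div_mul_le (hδpos n) hx.le
      simpa using hδ0.const_add x
    · exact hx.trans_le (le_natCeil_div_mul (hδpos n) x)
  refine ((hF x hx).tendsto.comp hnode).congr' ?_
  filter_upwards [hδ0.eventually (gt_mem_nhds one_pos), hnδ.eventually_gt_atTop (x + 1)]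
    with n hδ1 hn
  rw [Function.comp_apply, rightRiemannStep_eq (hδpos n) hx, if_pos]
  have : (⌈x / δ n⌉₊ : ℝ) * δ n < n * δ n := by
    linarith [natCeil_div_mul_le (hδpos n) hx.le]
  exact_mod_cast (lt_of_mul_lt_mul_right this (hδpos n).le).le

theorem tendsto_sum_smul_integral_Ioi [NormedSpace ℝ E] [CompleteSpace E] {δ : ℕ → ℝ}
    (hδpos : ∀ n, 0 < δ n) (hδ0 : Tendsto δ atTop (𝓝 0))
    (hnδ : Tendsto (fun n : ℕ => n * δ n) atTop atTop) (hF : ContinuousOn F (Ioi 0))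
    {b : ℝ → ℝ} (hb_int : IntegrableOn b (Ioi 0)) (hb : AntitoneOn b (Ioi 0))
    (hFb : ∀ y, 0 < y → ‖F y‖ ≤ b y) :
    Tendsto (fun n : ℕ => ∑ ℓ ∈ Finset.Icc 1 n, δ n • F (ℓ * δ n)) atTop
      (𝓝 (∫ x in Ioi 0, F x)) := by
  simp_rw [← integral_rightRiemannStep (hδpos _)]
  refine tendsto_integral_of_dominated_convergence b (fun n => ?_) hb_int (fun n => ?_) ?_
  · exact (Finset.stronglyMeasurable_fun_sum _ fun ℓ _ =>
      stronglyMeasurable_const.indicator measurableSet_Ioc).aestronglyMeasurable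
  · exact (ae_restrict_iff' measurableSet_Ioi).mpr <| .of_forall fun x hx =>
      norm_rightRiemannStep_le hb hFb (hδpos n) hx
  · exact (ae_restrict_iff' measurableSet_Ioi).mpr <| .of_forall fun x hx =>
      tendsto_rightRiemannStep hδpos hδ0 hnδ hF hx

end RiemannSum

lemma min_one_div_le_two_mul_div {y : ℝ} (hy : 0 < y) : min y (1 / y) ≤ 2 * y / (1 + y ^ 2) := by
  rw [le_div_iff₀ (by positivity)]
  rcases le_total y 1 with h | h
  · nlinarith [min_le_left y (1 / y)]
  · have h1 : min y (1 / y) * y ≤ 1 := by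
      calc min y (1 / y) * y ≤ 1 / y * y := by gcongr; exact min_le_right _ _
        _ = 1 := by field_simp
    nlinarith [min_le_left y (1 / y)]

lemma norm_cexp_sub_one_div_le {g : ℝ → ℂ} {C : ℝ}
    (hg : ∀ x, 0 < x → ‖g x‖ ≤ C * min x (1 / x)) (t : ℝ) {y : ℝ} (hy : 0 < y) :
    ‖(cexp (Complex.I * t * g (1 / y)) - 1) / y‖ ≤
      2 * (|t| * C * rexp (|t| * C)) * (1 + y ^ 2)⁻¹ := by
  have hC : 0 ≤ C := by simpa using (norm_nonneg _).trans (hg 1 one_pos)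
  set u := Complex.I * t * g (1 / y)
  set m := min y (1 / y)
  have hm1 : m ≤ 1 := by
    rcases le_total y 1 with h | h
    · exact (min_le_left _ _).trans h
    · exact (min_le_right _ _).trans (by rw [div_le_one hy]; exact h)
  have hu : ‖u‖ ≤ |t| * C * m := by
    have h := hg (1 / y) (by positivity)
    rw [one_div_one_div, min_comm] at h
    simp only [u, norm_mul, Complex.norm_I, one_mul, Complex.norm_real, Real.norm_eq_abs]
    rw [mul_assoc]
    gcongr
  have hu1 : ‖u‖ ≤ |t| * C := hu.trans (mul_le_of_le_one_right (by positivity) hm1)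
  calc ‖(cexp u - 1) / y‖ = ‖cexp u - 1‖ / y := by
        rw [norm_div, Complex.norm_real, Real.norm_of_nonneg hy.le]
    _ ≤ ‖u‖ * rexp ‖u‖ / y := by
        gcongr
        simpa using Complex.norm_exp_sub_sum_le_norm_mul_exp u 1
    _ ≤ |t| * C * m * rexp (|t| * C) / y := by gcongr
    _ ≤ |t| * C * (2 * y / (1 + y ^ 2)) * rexp (|t| * C) / y := by
        gcongr
        exact min_one_div_le_two_mul_div hy
    _ = 2 * (|t| * C * rexp (|t| * C)) * (1 + y ^ 2)⁻¹ := by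
        field_simp

lemma continuousOn_cexp_mul_comp_one_div_sub_one_div {g : ℝ → ℂ} (hg : ContinuousOn g (Ioi 0))
    (c : ℂ) : ContinuousOn (fun x : ℝ => (cexp (c * g (1 / x)) - 1) / x) (Ioi 0) := by
  have hg_inv : ContinuousOn (fun x : ℝ => g (1 / x)) (Ioi 0) :=
    hg.comp (continuousOn_const.div continuousOn_id fun x hx => hx.ne')
      fun x hx => mem_Ioi.mpr (one_div_pos.mpr hx)
  exact ((Complex.continuous_exp.comp_continuousOn (continuousOn_const.mul hg_inv)).sub
    continuousOn_const).div Complex.continuous_ofReal.continuousOn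
      fun x hx => Complex.ofReal_ne_zero.mpr (ne_of_gt hx)

theorem char_fun_convergence (θ : ℝ) (hθ : 0 < θ)
    {Ω : Type*} [MeasurableSpace Ω] (μ : Measure Ω) [IsProbabilityMeasure μ]
    (W : ℕ → Ω → ℕ) (hmeas : ∀ ℓ, Measurable (W ℓ))
    (hindep : iIndepFun W μ)
    (hpois : ∀ ℓ : ℕ, 1 ≤ ℓ → ∀ k : ℕ,
      μ {ω | W ℓ ω = k} =
        ENNReal.ofReal (Real.exp (-(θ / ℓ)) * (θ / ℓ) ^ k / (Nat.factorial k)))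
    (δ : ℕ → ℝ) (hδpos : ∀ n, 0 < δ n)
    (hδ0 : Tendsto δ atTop (nhds 0))
    (hδtop : Tendsto (fun n : ℕ => (n : ℝ) * δ n) atTop atTop)
    (g : ℝ → ℂ) (hgcont : ContinuousOn g (Set.Ioi 0))
    (C : ℝ) (hC : 0 < C)
    (hg : ∀ x : ℝ, 0 < x → ‖g x‖ ≤ C * min x (1 / x)) :
    ∀ t : ℝ,
      Tendsto
        (fun n : ℕ => ∫ ω,
          Complex.exp (Complex.I * t *
            ∑ ℓ ∈ Finset.Icc 1 n, (W ℓ ω : ℂ) * g (1 / (ℓ * δ n))) ∂μ)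
        atTop
        (nhds (Complex.exp ((θ : ℂ) *
          ∫ x in Set.Ioi (0 : ℝ), (Complex.exp (Complex.I * t * g (1 / x)) - 1) / (x : ℂ)))) := by
  intro t
  set F : ℝ → ℂ := fun x => (Complex.exp (Complex.I * t * g (1 / x)) - 1) / x
  have hlaw : ∀ n, ∀ ℓ ∈ Finset.Icc 1 n, μ.map (W ℓ) = poissonMeasure (θ / ℓ).toNNReal :=
    fun n ℓ hℓ => map_eq_poissonMeasure (hmeas ℓ) (by positivity) (hpois ℓ (Finset.mem_Icc.mp hℓ).1)
  have hchar : ∀ n, ∫ ω, Complex.exp (Complex.I * t *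
      ∑ ℓ ∈ Finset.Icc 1 n, (W ℓ ω : ℂ) * g (1 / (ℓ * δ n))) ∂μ =
      Complex.exp (θ * ∑ ℓ ∈ Finset.Icc 1 n, δ n • F (ℓ * δ n)) := by
    intro n
    simp_rw [Finset.mul_sum, ← mul_assoc, mul_right_comm _ (W _ _ : ℂ)]
    rw [integral_cexp_sum_mul_poisson hindep hmeas _ _ (hlaw n)]
    congr 1
    refine Finset.sum_congr rfl fun ℓ hℓ => ?_
    have hℓ : (ℓ : ℂ) ≠ 0 := Nat.cast_ne_zero.mpr (by grind)
    have hδ : (δ n : ℂ) ≠ 0 := Complex.ofReal_ne_zero.mpr (hδpos n).ne'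
    rw [Real.coe_toNNReal _ (by positivity), Complex.real_smul]
    simp only [F]
    push_cast
    field_simp
  have hb : AntitoneOn (fun y : ℝ => 2 * (|t| * C * rexp (|t| * C)) * (1 + y ^ 2)⁻¹) (Ioi 0) := by
    intro x (hx : 0 < x) y _ hxy
    dsimp only
    gcongr
  have hF := tendsto_sum_smul_integral_Ioi hδpos hδ0 hδtop
    (continuousOn_cexp_mul_comp_one_div_sub_one_div hgcont _)
    (integrable_inv_one_add_sq.integrableOn.const_mul _) hb fun y hy =>
      norm_cexp_sub_one_div_le hg t hy
  simp_rw [hchar]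
  exact (Complex.continuous_exp.tendsto _).comp (hF.const_mul _)
end
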